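/- The general solution of the ODE y''''(α) = 2·(1 − 3α(1−α))/(α²(1−α)²)·y''(α) on (0,1) is spanned by the four linearly independent functions: 1, α, 1 − (1−α)ln(1−α) − α ln α, and (3/10)α⁵ − (3/4)α⁴ + (1/6)α³ + (1/2)α² − (1−α)ln(1−α) + 1 − α; in particular each of these four functions satisfies the ODE. -/

import Mathlib

/-!
Only `y''` and `y''''` enter the equation, and for the four functions they are explicit:
`0` for the affine ones, `-(1-α)⁻¹ - α⁻¹` and `-2(1-α)⁻³ - 2α⁻³` for
`1 - (1-α) log(1-α) - α log α`, and a polynomial plus `-(1-α)⁻¹`, resp. `-2(1-α)⁻³`, for the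
last function. Substituting them turns the equation into an identity of rational functions.

For independence, a vanishing combination `c₀ + c₁ α + c₂ sol3 + c₃ sol4` is evaluated at
`α = 0, 1, 1/2, 2`. With `L = log 2`, the values at `1/2` and at `2`, each combined with those
at `0` and `1`, give `L (c₂ + c₃/2) = 0` and `-2L c₂ + c₃/2 = 0`, which force `c₂ = c₃ = 0`.
-/

noncomputable def sol1 : ℝ → ℝ := fun _ => 1
noncomputable def sol2 : ℝ → ℝ := fun α => α
noncomputable def sol3 : ℝ → ℝ := fun α => 1 - (1 - α) * Real.log (1 - α) - α * Real.log α
noncomputable def sol4 : ℝ → ℝ := fun α =>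
  3 / 10 * α ^ 5 - 3 / 4 * α ^ 4 + 1 / 6 * α ^ 3 + 1 / 2 * α ^ 2
    - (1 - α) * Real.log (1 - α) + 1 - α

open Real Set

theorem Set.EqOn.iteratedDeriv_succ_of_hasDerivAt {𝕜 F : Type*} [NontriviallyNormedField 𝕜]
    [NormedAddCommGroup F] [NormedSpace 𝕜 F] {s : Set 𝕜} {n : ℕ} {f g g' : 𝕜 → F}
    (h : EqOn (iteratedDeriv n f) g s) (hs : IsOpen s) (hg : ∀ x ∈ s, HasDerivAt g (g' x) x) :
    EqOn (iteratedDeriv (n + 1) f) g' s := fun x hx => by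
  rw [iteratedDeriv_succ, h.deriv hs hx, (hg x hx).deriv]

def SolvesQuickselectODE (y : ℝ → ℝ) : Prop :=
  ∀ α ∈ Ioo (0 : ℝ) 1,
    iteratedDeriv 4 y α =
      2 * (1 - 3 * α * (1 - α)) / (α ^ 2 * (1 - α) ^ 2) * iteratedDeriv 2 y α

theorem solvesQuickselectODE_of_hasDerivAt {y y₁ y₂ y₃ y₄ : ℝ → ℝ}
    (h₁ : ∀ x ∈ Ioo (0 : ℝ) 1, HasDerivAt y (y₁ x) x)
    (h₂ : ∀ x ∈ Ioo (0 : ℝ) 1, HasDerivAt y₁ (y₂ x) x)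
    (h₃ : ∀ x ∈ Ioo (0 : ℝ) 1, HasDerivAt y₂ (y₃ x) x)
    (h₄ : ∀ x ∈ Ioo (0 : ℝ) 1, HasDerivAt y₃ (y₄ x) x)
    (hode : ∀ α ∈ Ioo (0 : ℝ) 1,
      y₄ α = 2 * (1 - 3 * α * (1 - α)) / (α ^ 2 * (1 - α) ^ 2) * y₂ α) :
    SolvesQuickselectODE y := by
  have e₀ : EqOn (iteratedDeriv 0 y) y (Ioo 0 1) := fun x _ => by rw [iteratedDeriv_zero]
  have e₂ := (e₀.iteratedDeriv_succ_of_hasDerivAt isOpen_Ioo h₁)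
    |>.iteratedDeriv_succ_of_hasDerivAt isOpen_Ioo h₂
  have e₄ := (e₂.iteratedDeriv_succ_of_hasDerivAt isOpen_Ioo h₃)
    |>.iteratedDeriv_succ_of_hasDerivAt isOpen_Ioo h₄
  intro α hα
  rw [e₄ hα, e₂ hα, hode α hα]

theorem hasDerivAt_one_sub_mul_log {x : ℝ} (hx : x ≠ 1) :
    HasDerivAt (fun x => (1 - x) * log (1 - x)) (-(log (1 - x) + 1)) x :=
  (hasDerivAt_mul_log (sub_ne_zero.2 hx.symm)).comp_const_sub 1 x

theorem hasDerivAt_log_one_sub {x : ℝ} (hx : x ≠ 1) :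
    HasDerivAt (fun x => log (1 - x)) (-(1 - x)⁻¹) x :=
  (hasDerivAt_log (sub_ne_zero.2 hx.symm)).comp_const_sub 1 x

theorem hasDerivAt_one_sub_zpow {𝕜 : Type*} [NontriviallyNormedField 𝕜] (m : ℤ) {x : 𝕜}
    (hx : x ≠ 1) :
    HasDerivAt (fun x => (1 - x) ^ m) (-(m * (1 - x) ^ (m - 1))) x :=
  (hasDerivAt_zpow m (1 - x) (.inl (sub_ne_zero.2 hx.symm))).comp_const_sub 1 x

theorem solvesQuickselectODE_sol1 : SolvesQuickselectODE sol1 :=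
  solvesQuickselectODE_of_hasDerivAt (y₁ := 0) (y₂ := 0) (y₃ := 0) (y₄ := 0)
    (fun x _ => hasDerivAt_const x 1) (fun x _ => hasDerivAt_const x 0)
    (fun x _ => hasDerivAt_const x 0) (fun x _ => hasDerivAt_const x 0) (fun _ _ => by simp)

theorem solvesQuickselectODE_sol2 : SolvesQuickselectODE sol2 :=
  solvesQuickselectODE_of_hasDerivAt (y₁ := 1) (y₂ := 0) (y₃ := 0) (y₄ := 0)
    (fun x _ => hasDerivAt_id' x) (fun x _ => hasDerivAt_const x 1)
    (fun x _ => hasDerivAt_const x 0) (fun x _ => hasDerivAt_const x 0) (fun _ _ => by simp)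

theorem solvesQuickselectODE_sol3 : SolvesQuickselectODE sol3 := by
  refine solvesQuickselectODE_of_hasDerivAt
    (y₁ := fun x => log (1 - x) - log x)
    (y₂ := fun x => -(1 - x) ^ (-1 : ℤ) - x ^ (-1 : ℤ))
    (y₃ := fun x => -(1 - x) ^ (-2 : ℤ) + x ^ (-2 : ℤ))
    (y₄ := fun x => -2 * (1 - x) ^ (-3 : ℤ) - 2 * x ^ (-3 : ℤ))
    (fun x hx => ?_) (fun x hx => ?_) (fun x hx => ?_) (fun x hx => ?_) (fun x hx => ?_)
  all_goals obtain ⟨hx₀, hx₁⟩ : x ≠ 0 ∧ x ≠ 1 := ⟨hx.1.ne', hx.2.ne⟩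
  · exact ((hasDerivAt_one_sub_mul_log hx₁).const_sub 1).fun_sub (hasDerivAt_mul_log hx₀)
      |>.congr_deriv (by ring)
  · exact (hasDerivAt_log_one_sub hx₁).fun_sub (hasDerivAt_log hx₀) |>.congr_deriv (by simp)
  · exact (hasDerivAt_one_sub_zpow (-1) hx₁).fun_neg.fun_sub (hasDerivAt_zpow (-1) x (.inl hx₀))
      |>.congr_deriv (by norm_num)
  · exact (hasDerivAt_one_sub_zpow (-2) hx₁).fun_neg.fun_add (hasDerivAt_zpow (-2) x (.inl hx₀))
      |>.congr_deriv (by norm_num; ring)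
  · have : (1 : ℝ) - x ≠ 0 := sub_ne_zero.2 hx₁.symm
    simp only [zpow_neg, zpow_ofNat]
    field_simp
    ring

theorem solvesQuickselectODE_sol4 : SolvesQuickselectODE sol4 := by
  refine solvesQuickselectODE_of_hasDerivAt
    (y₁ := fun x => 3 / 2 * x ^ 4 - 3 * x ^ 3 + 1 / 2 * x ^ 2 + x + log (1 - x))
    (y₂ := fun x => 6 * x ^ 3 - 9 * x ^ 2 + x + 1 - (1 - x) ^ (-1 : ℤ))
    (y₃ := fun x => 18 * x ^ 2 - 18 * x + 1 - (1 - x) ^ (-2 : ℤ))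
    (y₄ := fun x => 36 * x - 18 - 2 * (1 - x) ^ (-3 : ℤ))
    (fun x hx => ?_) (fun x hx => ?_) (fun x hx => ?_) (fun x hx => ?_) (fun x hx => ?_)
  all_goals obtain ⟨hx₀, hx₁⟩ : x ≠ 0 ∧ x ≠ 1 := ⟨hx.1.ne', hx.2.ne⟩
  · exact (((((((hasDerivAt_pow 5 x).const_mul (3 / 10)).fun_sub
      ((hasDerivAt_pow 4 x).const_mul (3 / 4))).fun_add
      ((hasDerivAt_pow 3 x).const_mul (1 / 6))).fun_add
      ((hasDerivAt_pow 2 x).const_mul (1 / 2))).fun_sub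
      (hasDerivAt_one_sub_mul_log hx₁)).add_const 1).fun_sub (hasDerivAt_id' x)
      |>.congr_deriv (by norm_num; ring)
  · exact ((((((hasDerivAt_pow 4 x).const_mul (3 / 2)).fun_sub
      ((hasDerivAt_pow 3 x).const_mul 3)).fun_add
      ((hasDerivAt_pow 2 x).const_mul (1 / 2))).fun_add (hasDerivAt_id' x)).fun_add
      (hasDerivAt_log_one_sub hx₁)).congr_deriv (by norm_num; ring)
  · exact (((((hasDerivAt_pow 3 x).const_mul 6).fun_sub
      ((hasDerivAt_pow 2 x).const_mul 9)).fun_add (hasDerivAt_id' x)).add_const 1).fun_sub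
      (hasDerivAt_one_sub_zpow (-1) hx₁) |>.congr_deriv (by norm_num; ring)
  · exact ((((hasDerivAt_pow 2 x).const_mul 18).fun_sub
      ((hasDerivAt_id' x).const_mul 18)).add_const 1).fun_sub
      (hasDerivAt_one_sub_zpow (-2) hx₁) |>.congr_deriv (by norm_num; ring)
  · have : (1 : ℝ) - x ≠ 0 := sub_ne_zero.2 hx₁.symm
    simp only [zpow_neg, zpow_ofNat]
    field_simp
    ring

theorem linearIndependent_sol : LinearIndependent ℝ ![sol1, sol2, sol3, sol4] := by
  rw [Fintype.linearIndependent_iff]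
  intro c hc
  have hsum (x : ℝ) : c 0 + c 1 * x + c 2 * sol3 x + c 3 * sol4 x = 0 := by
    simpa [Fin.sum_univ_four, sol1, sol2] using congrFun hc x
  have h₀ := hsum 0
  have h₁ := hsum 1
  have h_half := hsum (1 / 2)
  have h₂ := hsum 2
  have log_half : log (1 / 2 : ℝ) = -log 2 := by rw [one_div, log_inv]
  -- `Real.log` is `log |·|`, so `log (1 - 2) = 0`.
  norm_num [sol3, sol4, log_neg_eq_log, log_half] at h₀ h₁ h_half h₂
  have hL : 0 < log 2 := log_pos one_lt_two
  have hc₂ : c 2 = 0 := by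
    have : c 2 * (log 2 * (1 + 2 * log 2)) = 0 := by
      linear_combination h_half - (h₀ + h₁) / 2 - log 2 * (h₂ - 2 * h₁ + h₀)
    simpa [hL.ne', (by positivity : 1 + 2 * log 2 ≠ 0)] using this
  have hc₃ : c 3 = 0 := by linear_combination 2 * (h₂ - 2 * h₁ + h₀) + 4 * log 2 * hc₂
  have hc₀ : c 0 = 0 := by linear_combination h₀ - hc₂ - hc₃
  have hc₁ : c 1 = 0 := by linear_combination h₁ - h₀ + 47 / 60 * hc₃
  intro i
  fin_cases i <;> assumption

/-- Each of the four functions `1`, `α`, `1 − (1−α)ln(1−α) − α ln α`, and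
`(3/10)α⁵ − (3/4)α⁴ + (1/6)α³ + (1/2)α² − (1−α)ln(1−α) + 1 − α` satisfies the ODE
`y'''' = 2(1 − 3α(1−α))/(α²(1−α)²)·y''` on `(0,1)`, and they are linearly
independent. -/
theorem ode_general_solution :
    (∀ y ∈ ({sol1, sol2, sol3, sol4} : Set (ℝ → ℝ)), ∀ α ∈ Set.Ioo (0:ℝ) 1,
      iteratedDeriv 4 y α
        = 2 * (1 - 3 * α * (1 - α)) / (α ^ 2 * (1 - α) ^ 2) * iteratedDeriv 2 y α) ∧
    LinearIndependent ℝ ![sol1, sol2, sol3, sol4] := by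
  refine ⟨?_, linearIndependent_sol⟩
  rintro y (rfl | rfl | rfl | rfl)
  exacts [solvesQuickselectODE_sol1, solvesQuickselectODE_sol2, solvesQuickselectODE_sol3,
    solvesQuickselectODE_sol4]
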